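/- Let X2 ∈ ℂ^{M×n}, V ∈ ℂ^{n×r}, U ∈ ℂ^{M×r}, and let Σ ∈ ℂ^{r×r} be invertible. Define A := X2 V Σ⁻¹ U* ∈ ℂ^{M×M} and the reduced matrix Ã := U* X2 V Σ⁻¹ ∈ ℂ^{r×r}, where U* denotes the conjugate transpose. Suppose w ∈ ℂ^r and λ ∈ ℂ satisfy Ã w = λ w with λ ≠ 0 and w ≠ 0. Then the vector ψ := λ⁻¹ · (X2 V Σ⁻¹) w is nonzero and satisfies A ψ = λ ψ; that is, every nonzero eigenvalue of the reduced matrix Ã is an eigenvalue of the full DMD operator A, with explicitly constructed eigenvector (DMD mode) ψ. -/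
import Mathlib


open Matrix

/-- Every nonzero eigenvalue of the reduced DMD matrix `Ã = U* X2 V Σ⁻¹` is an
eigenvalue of the full DMD operator `A = X2 V Σ⁻¹ U*`, with DMD mode
`ψ = λ⁻¹ (X2 V Σ⁻¹) w`. -/
theorem dmd_mode_eigenvector {M n r : ℕ}
    (X2 : Matrix (Fin M) (Fin n) ℂ) (V : Matrix (Fin n) (Fin r) ℂ)
    (U : Matrix (Fin M) (Fin r) ℂ) (S : Matrix (Fin r) (Fin r) ℂ)
    (hS : IsUnit S)
    (w : Fin r → ℂ) (lam : ℂ)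
    (hw : w ≠ 0) (hlam : lam ≠ 0)
    (heig : (U.conjTranspose * X2 * V * S⁻¹).mulVec w = lam • w) :
    letI A := X2 * V * S⁻¹ * U.conjTranspose
    letI ψ := lam⁻¹ • (X2 * V * S⁻¹).mulVec w
    ψ ≠ 0 ∧ A.mulVec ψ = lam • ψ := by
  set P := X2 * V * S⁻¹ with hP
  have hUP : U.conjTranspose.mulVec (P.mulVec w) = lam • w := by
    rw [← mulVec_mulVec]
    simpa [hP, Matrix.mul_assoc] using heig
  constructor
  · intro h
    have hPw : P.mulVec w = 0 := by
      have := congrArg (fun v => lam • v) h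
      simpa [smul_smul, mul_inv_cancel₀ hlam, smul_zero] using this
    have : lam • w = 0 := by rw [← hUP, hPw, mulVec_zero]
    exact hw (by simpa [hlam] using this)
  · have : (P * U.conjTranspose).mulVec (lam⁻¹ • P.mulVec w)
        = lam • lam⁻¹ • P.mulVec w := by
      rw [mulVec_smul, ← mulVec_mulVec, hUP]
      rw [mulVec_smul]; rw [smul_smul, smul_smul, mul_comm]
    simpa [hP, Matrix.mul_assoc] using this
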